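/- The only subspaces of S invariant under all of the Bernard–Felder operators e_n, h_n, f_n (n ∈ ℤ) are {0} and S itself if and only if K ≠ 0; that is, the Bernard–Felder module is irreducible if and only if K ≠ 0. -/

import Mathlib

/-!
For `K ≠ 0`, start from a nonzero `q ∈ N`. If `q` involves some `x_{k₀}`, pick `y_{k₁}` not
occurring in `q`: for `n = -k₀ - k₁` the operator `e_n` lowers the `x`-degree, and
`e_n q = y_{k₁} ∂_{x_{k₀}} q + (terms free of y_{k₁})` is nonzero. Descending, `N` contains a
nonzero polynomial in the `y`'s alone. On such polynomials `h_k = 2kK ∂_{y_k}` for `k > 0`, so `N`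
contains `1`; there `h_{-k}` is multiplication by `y_k`, and together with the `f_m` these
generate all of `S` from `1`.

For `K = 0` the only `∂_y` in the operators carry the factor `K`, and every remaining term
preserves the ideal generated by the `y`'s, a proper nonzero invariant subspace.
-/

open MvPolynomial

/-- The ring `S = ℂ[x_m (m ∈ ℤ); y_k (k ≥ 1)]`: `inl m` indexes `x_m`, `inr k`
indexes `y_k`. -/
abbrev SSpace : Type := MvPolynomial (ℤ ⊕ {k : ℕ // 1 ≤ k}) ℂ

/-- `f_n` : multiplication by `x_n`.  (Applied to each polynomial, all the `∑ᶠ` sums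
appearing below are finite, so they compute the intended operators.) -/
noncomputable def fop (n : ℤ) : SSpace → SSpace := fun q => X (Sum.inl n) * q

/-- `h_n = −2 Σ_{m∈ℤ} x_{m+n} ∂_{x_m} + [n<0] y_{−n}· + [n>0] 2nK ∂_{y_n} + δ_{n,0} J`. -/
noncomputable def hop (K J : ℂ) (n : ℤ) : SSpace → SSpace := fun q =>
  -((2 : ℂ) • ∑ᶠ m : ℤ, X (Sum.inl (m + n)) * pderiv (Sum.inl m) q)
  + (if hn : n < 0 then X (Sum.inr ⟨(-n).toNat, by omega⟩) * q else 0)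
  + (if hn : 0 < n then (2 * (n : ℂ) * K) • pderiv (Sum.inr ⟨n.toNat, by omega⟩) q else 0)
  + (if n = 0 then J else 0) • q

/-- `e_n = −Σ_{m,k∈ℤ} x_{k+m+n} ∂_{x_k} ∂_{x_m} + Σ_{k>0} y_k ∂_{x_{−k−n}}
 + 2K Σ_{m>0} m ∂_{y_m} ∂_{x_{m−n}} + (Kn+J) ∂_{x_{−n}}`. -/
noncomputable def eop (K J : ℂ) (n : ℤ) : SSpace → SSpace := fun q =>
  -(∑ᶠ mk : ℤ × ℤ, X (Sum.inl (mk.2 + mk.1 + n)) *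
      pderiv (Sum.inl mk.2) (pderiv (Sum.inl mk.1) q))
  + (∑ᶠ k : {k : ℕ // 1 ≤ k}, X (Sum.inr k) * pderiv (Sum.inl (-(k : ℤ) - n)) q)
  + (2 * K) • ∑ᶠ m : {m : ℕ // 1 ≤ m}, ((m : ℕ) : ℂ) •
      pderiv (Sum.inr m) (pderiv (Sum.inl ((m : ℤ) - n)) q)
  + (K * (n : ℂ) + J) • pderiv (Sum.inl (-n)) q

theorem AddSubmonoidClass.finsum_mem {S M : Type*} {ι : Sort*} [AddCommMonoid M] [SetLike S M]
    [AddSubmonoidClass S M] (s : S) {f : ι → M} (h : ∀ i, f i ∈ s) : ∑ᶠ i, f i ∈ s :=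
  finsum_induction (· ∈ s) (zero_mem s) (fun _ _ => add_mem) h

namespace MvPolynomial

variable {R σ : Type*}

section CommSemiring

variable [CommSemiring R]

theorem add_single_mem_support_of_mem_support_pderiv {i : σ} {m : σ →₀ ℕ}
    {p : MvPolynomial σ R} (h : m ∈ (pderiv i p).support) : m + Finsupp.single i 1 ∈ p.support := by
  rw [mem_support_iff, coeff_pderiv] at h
  exact mem_support_iff.2 (left_ne_zero_of_mul h)

theorem pderiv_ne_zero_of_mem_vars [NoZeroDivisors R] [CharZero R] {i : σ}
    {p : MvPolynomial σ R} (h : i ∈ p.vars) : pderiv i p ≠ 0 := by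
  classical
  obtain ⟨m, hm, hmi⟩ := (mem_vars_iff_mem_support i).1 h
  have hle : Finsupp.single i 1 ≤ m :=
    Finsupp.single_le_iff.2 (Nat.one_le_iff_ne_zero.2 (Finsupp.mem_support_iff.1 hmi))
  intro h0
  have := congrArg (coeff (m - Finsupp.single i 1)) h0
  rw [coeff_pderiv, tsub_add_cancel_of_le hle, coeff_zero] at this
  exact mul_ne_zero (mem_support_iff.1 hm) (Nat.cast_add_one_ne_zero _) this

theorem pderiv_mem_supported {s : Set σ} (i : σ) {p : MvPolynomial σ R}
    (hp : p ∈ supported R s) : pderiv i p ∈ supported R s := by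
  classical
  rw [supported_eq_adjoin_X] at hp ⊢
  induction hp using Algebra.adjoin_induction with
  | mem x hx =>
    obtain ⟨j, -, rfl⟩ := hx
    rw [pderiv_X, Pi.single_apply]
    split_ifs
    · exact one_mem _
    · exact zero_mem _
  | algebraMap r => rw [MvPolynomial.algebraMap_eq, pderiv_C]; exact zero_mem _
  | add x y _ _ hx hy => rw [map_add]; exact add_mem hx hy
  | mul x y hx' hy' hx hy =>
    rw [Derivation.leibniz, smul_eq_mul, smul_eq_mul]
    exact add_mem (mul_mem hx' hy) (mul_mem hy' hx)

theorem pderiv_eq_zero_of_mem_supported {s : Set σ} {i : σ} (hi : i ∉ s) {p : MvPolynomial σ R}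
    (hp : p ∈ supported R s) : pderiv i p = 0 :=
  pderiv_eq_zero_of_notMem_vars fun h => hi (mem_supported.1 hp h)

theorem exists_inl_mem_vars_of_notMem_supported {α β : Type*} {p : MvPolynomial (α ⊕ β) R}
    (hp : p ∉ supported R (Set.range Sum.inr)) : ∃ a, Sum.inl a ∈ p.vars := by
  obtain ⟨v, hv, hvr⟩ := Set.not_subset.1 (mt mem_supported.2 hp)
  rcases v with a | b
  · exact ⟨a, hv⟩
  · exact absurd ⟨b, rfl⟩ hvr

theorem X_mul_add_ne_zero {i : σ} {D E : MvPolynomial σ R} (hD : D ∈ supported R {i}ᶜ)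
    (hE : E ∈ supported R {i}ᶜ) (hD0 : D ≠ 0) : X i * D + E ≠ 0 := by
  intro h
  have := congrArg (pderiv i) h
  rw [map_add, Derivation.leibniz, pderiv_X_self, pderiv_eq_zero_of_mem_supported (by simp) hD,
    pderiv_eq_zero_of_mem_supported (by simp) hE, smul_zero, smul_eq_mul, mul_one, zero_add,
    add_zero, map_zero] at this
  exact hD0 this

theorem pderiv_mem_span_X_image {s : Set σ} {i : σ} (hi : i ∉ s) {p : MvPolynomial σ R}
    (hp : p ∈ Ideal.span (X '' s)) : pderiv i p ∈ Ideal.span (X '' s) := by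
  induction hp using Submodule.span_induction with
  | mem x hx =>
    obtain ⟨j, hj, rfl⟩ := hx
    rw [pderiv_X_of_ne (by rintro rfl; exact hi hj)]
    exact zero_mem _
  | zero => rw [map_zero]; exact zero_mem _
  | add x y _ _ hx hy => rw [map_add]; exact add_mem hx hy
  | smul a x hx' hx =>
    rw [smul_eq_mul, pderiv_mul]
    exact add_mem (Ideal.mul_mem_left _ _ hx') (Ideal.mul_mem_left _ _ hx)

theorem eq_top_of_one_mem_of_X_mul_mem {N : Submodule R (MvPolynomial σ R)} {s : Set σ}
    (h1 : 1 ∈ N) (hs : ∀ i ∈ s, ∀ p ∈ N, p ∈ supported R s → X i * p ∈ N)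
    (hsc : ∀ i ∉ s, ∀ p ∈ N, X i * p ∈ N) : N = ⊤ := by
  have hsupported : ∀ r ∈ supported R s, r ∈ N := by
    intro r hr
    rw [supported_eq_range_rename] at hr
    obtain ⟨r, rfl⟩ := (AlgHom.mem_range _).1 hr
    clear hr
    induction r using MvPolynomial.induction_on with
    | C a => rw [rename_C, ← mul_one (C a), ← smul_eq_C_mul]; exact N.smul_mem a h1
    | add p q hp hq => rw [map_add]; exact N.add_mem hp hq
    | mul_X p i hp =>
      rw [map_mul, rename_X, mul_comm]
      exact hs i i.2 _ hp ((supported_eq_range_rename (R := R) s).symm ▸ AlgHom.mem_range_self _ p)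
  have hmul : ∀ q r, r ∈ supported R s → q * r ∈ N := by
    intro q
    induction q using MvPolynomial.induction_on with
    | C a => intro r hr; rw [← smul_eq_C_mul]; exact N.smul_mem a (hsupported r hr)
    | add p q hp hq => intro r hr; rw [add_mul]; exact N.add_mem (hp r hr) (hq r hr)
    | mul_X p i hp =>
      intro r hr
      by_cases hi : i ∈ s
      · rw [mul_assoc]
        exact hp _ (mul_mem (Algebra.subset_adjoin (Set.mem_image_of_mem X hi)) hr)
      · rw [mul_comm p, mul_assoc]
        exact hsc i hi _ (hp r hr)
  exact eq_top_iff.2 fun q _ => mul_one q ▸ hmul q 1 (one_mem _)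

variable (R) in
/-- The bound `d` is an integer, so that lowering it by the weight of a variable involves no
truncated subtraction. -/
noncomputable def weightedDegreeLE (w : σ → ℕ) (d : ℤ) : Submodule R (MvPolynomial σ R) :=
  restrictSupport R {m | (Finsupp.weight w m : ℤ) ≤ d}

theorem pderiv_mem_weightedDegreeLE {w : σ → ℕ} {d : ℤ} (i : σ) {p : MvPolynomial σ R}
    (hp : p ∈ weightedDegreeLE R w d) : pderiv i p ∈ weightedDegreeLE R w (d - w i) := by
  rw [weightedDegreeLE, mem_restrictSupport_iff] at hp ⊢
  intro m hm
  have := hp (add_single_mem_support_of_mem_support_pderiv hm)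
  simp only [Set.mem_ofPred_eq, map_add, Finsupp.weight_single, one_smul, Nat.cast_add] at this ⊢
  omega

theorem X_mul_mem_weightedDegreeLE {w : σ → ℕ} {d : ℤ} (i : σ) {p : MvPolynomial σ R}
    (hp : p ∈ weightedDegreeLE R w d) : X i * p ∈ weightedDegreeLE R w (d + w i) := by
  rw [weightedDegreeLE, mem_restrictSupport_iff] at hp ⊢
  intro m hm
  rw [Finset.mem_coe, support_X_mul, Finset.mem_map] at hm
  obtain ⟨m, hm, rfl⟩ := hm
  have := hp hm
  simp only [Set.mem_ofPred_eq, addLeftEmbedding_apply, map_add, Finsupp.weight_single, one_smul,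
    Nat.cast_add] at this ⊢
  omega

theorem weightedDegreeLE_eq_bot {w : σ → ℕ} {d : ℤ} (hd : d < 0) :
    weightedDegreeLE R w d = ⊥ := by
  refine eq_bot_iff.2 fun p hp => (Submodule.mem_bot R).2 (support_eq_empty.1 ?_)
  rw [weightedDegreeLE, mem_restrictSupport_iff] at hp
  refine Finset.eq_empty_of_forall_notMem fun m hm => ?_
  have : (Finsupp.weight w m : ℤ) ≤ d := hp hm
  omega

theorem exists_mem_weightedDegreeLE (w : σ → ℕ) (p : MvPolynomial σ R) :
    ∃ d : ℕ, p ∈ weightedDegreeLE R w d :=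
  ⟨p.support.sup (Finsupp.weight w), (mem_restrictSupport_iff R).2 fun _ hm => by
    exact_mod_cast Finset.le_sup (f := Finsupp.weight w) hm⟩

theorem exists_ne_zero_mem_of_descent (w : σ → ℕ) {N : Submodule R (MvPolynomial σ R)}
    (P : MvPolynomial σ R → Prop)
    (hdesc : ∀ (d : ℤ), ∀ p ∈ N, p ∈ weightedDegreeLE R w d → p ≠ 0 → ¬ P p →
      ∃ p' ∈ N, p' ∈ weightedDegreeLE R w (d - 1) ∧ p' ≠ 0)
    {p : MvPolynomial σ R} (hpN : p ∈ N) (hp : p ≠ 0) : ∃ p' ∈ N, p' ≠ 0 ∧ P p' := by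
  obtain ⟨d, hd⟩ := exists_mem_weightedDegreeLE w p
  induction d generalizing p with
  | zero =>
    by_contra! hP
    obtain ⟨p', -, hp'd, hp'⟩ := hdesc 0 p hpN (by simpa using hd) hp (hP p hpN hp)
    rw [weightedDegreeLE_eq_bot (by norm_num)] at hp'd
    exact hp' ((Submodule.mem_bot R).1 hp'd)
  | succ d ih =>
    by_cases hPp : P p
    · exact ⟨p, hpN, hp, hPp⟩
    obtain ⟨p', hp'N, hp'd, hp'⟩ := hdesc _ p hpN hd hp hPp
    exact ih hp'N hp' (by simpa using hp'd)

end CommSemiring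

theorem one_mem_of_forall_pderiv_mem {K : Type*} [Field K] [CharZero K]
    {N : Submodule K (MvPolynomial σ K)} (hN : ∀ i, ∀ p ∈ N, pderiv i p ∈ N)
    {p : MvPolynomial σ K} (hpN : p ∈ N) (hp : p ≠ 0) : 1 ∈ N := by
  classical
  obtain ⟨c, hcN, hc0, hc⟩ := exists_ne_zero_mem_of_descent (fun _ => 1) (fun q => q.vars = ∅)
    (fun d q hqN hqd _ hq => by
      obtain ⟨i, hi⟩ := Finset.nonempty_iff_ne_empty.2 hq
      exact ⟨pderiv i q, hN i q hqN, pderiv_mem_weightedDegreeLE i hqd,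
        pderiv_ne_zero_of_mem_vars hi⟩) hpN hp
  rw [vars_eq_empty_iff_eq_C] at hc
  have ha : c.coeff 0 ≠ 0 := fun h => hc0 (by rw [hc, h, C_0])
  have h1 : (c.coeff 0)⁻¹ • c = 1 := by
    rw [hc, smul_eq_C_mul, ← C_mul, coeff_C, if_pos rfl, inv_mul_cancel₀ ha, C_1]
  exact h1 ▸ N.smul_mem _ hcN

end MvPolynomial

namespace BernardFelder

def xWeight : ℤ ⊕ {k : ℕ // 1 ≤ k} → ℕ := Sum.elim (fun _ => 1) (fun _ => 0)

theorem eop_mem_weightedDegreeLE {K J : ℂ} {n d : ℤ} {q : SSpace}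
    (hq : q ∈ weightedDegreeLE ℂ xWeight d) : eop K J n q ∈ weightedDegreeLE ℂ xWeight (d - 1) := by
  have hx : ∀ {e : ℤ} {p : SSpace} (m : ℤ), p ∈ weightedDegreeLE ℂ xWeight e →
      pderiv (Sum.inl m) p ∈ weightedDegreeLE ℂ xWeight (e - 1) :=
    fun m => pderiv_mem_weightedDegreeLE (Sum.inl m)
  refine add_mem (add_mem (add_mem (neg_mem (AddSubmonoidClass.finsum_mem _ fun mk => ?_))
    (AddSubmonoidClass.finsum_mem _ fun k => ?_)) (Submodule.smul_mem _ _
      (AddSubmonoidClass.finsum_mem _ fun m => Submodule.smul_mem _ _ ?_)))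
    (Submodule.smul_mem _ _ (hx _ hq))
  · simpa [xWeight] using X_mul_mem_weightedDegreeLE (Sum.inl (mk.2 + mk.1 + n)) (hx _ (hx _ hq))
  · simpa [xWeight] using X_mul_mem_weightedDegreeLE (Sum.inr k) (hx _ hq)
  · simpa [xWeight] using pderiv_mem_weightedDegreeLE (Sum.inr m) (hx _ hq)

theorem exists_eop_ne_zero (K J : ℂ) {q : SSpace} (hq : q ∉ supported ℂ (Set.range Sum.inr)) :
    ∃ n, eop K J n q ≠ 0 := by
  obtain ⟨k₀, hk₀⟩ := exists_inl_mem_vars_of_notMem_supported hq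
  have : Infinite {k : ℕ // 1 ≤ k} := (Set.Ici_infinite 1).to_subtype
  obtain ⟨k₁, hk₁⟩ :=
    Infinite.exists_notMem_finset (q.vars.preimage Sum.inr Sum.inr_injective.injOn)
  rw [Finset.mem_preimage] at hk₁
  set P := supported ℂ ({Sum.inr k₁}ᶜ : Set (ℤ ⊕ {k : ℕ // 1 ≤ k}))
  have hqP : q ∈ P := mem_supported.2 fun v hv (h : v = Sum.inr k₁) => hk₁ (h ▸ hv)
  set n : ℤ := -k₀ - (k₁ : ℕ)
  set f : {k : ℕ // 1 ≤ k} → SSpace := fun k => X (Sum.inr k) * pderiv (Sum.inl (-(k : ℤ) - n)) q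
  have hfin : (Function.support f).Finite := by
    refine (q.vars.finite_toSet.preimage (f := fun k : {k : ℕ // 1 ≤ k} =>
      (Sum.inl (-(k : ℤ) - n) : ℤ ⊕ {k : ℕ // 1 ≤ k})) fun a _ b _ h => ?_).subset fun k hk => ?_
    · simp only [Sum.inl.injEq] at h
      exact Subtype.ext (by omega)
    · by_contra hv
      exact hk (by simp only [f, pderiv_eq_zero_of_notMem_vars hv, mul_zero])
  have hfk₁ : f k₁ = X (Sum.inr k₁) * pderiv (Sum.inl k₀) q := by simp only [f, n]; ring_nf
  have hrest : ∑ᶠ (k) (_ : k ≠ k₁), f k ∈ P :=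
    AddSubmonoidClass.finsum_mem _ fun k => AddSubmonoidClass.finsum_mem _ fun hk =>
      mul_mem (Algebra.subset_adjoin ⟨_, by simpa using hk, rfl⟩) (pderiv_mem_supported _ hqP)
  refine ⟨n, ?_⟩
  rw [eop, ← add_finsum_cond_ne k₁ hfin, hfk₁, add_left_comm, add_assoc, add_assoc]
  refine X_mul_add_ne_zero (pderiv_mem_supported _ hqP) (add_mem (add_mem (neg_mem
    (AddSubmonoidClass.finsum_mem _ fun mk => mul_mem ?_ ?_)) hrest) (add_mem ?_ ?_))
    (pderiv_ne_zero_of_mem_vars hk₀)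
  · exact Algebra.subset_adjoin ⟨_, by simp, rfl⟩
  · exact pderiv_mem_supported _ (pderiv_mem_supported _ hqP)
  · exact P.smul_mem (AddSubmonoidClass.finsum_mem _ fun m =>
      P.smul_mem (pderiv_mem_supported _ (pderiv_mem_supported _ hqP)) _) _
  · exact P.smul_mem (pderiv_mem_supported _ hqP) _

theorem exists_ne_zero_mem_supported_inr {K J : ℂ} {N : Submodule ℂ SSpace}
    (he : ∀ n : ℤ, ∀ q ∈ N, eop K J n q ∈ N) {q : SSpace} (hqN : q ∈ N) (hq0 : q ≠ 0) :
    ∃ p ∈ N, p ≠ 0 ∧ p ∈ supported ℂ (Set.range Sum.inr) :=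
  exists_ne_zero_mem_of_descent xWeight _ (fun _ p hpN hpd hp0 hpy => by
    obtain ⟨n, hn⟩ := exists_eop_ne_zero K J hpy
    exact ⟨eop K J n p, he n p hpN, eop_mem_weightedDegreeLE hpd, hn⟩) hqN hq0

theorem finsum_X_inl_mul_pderiv_inl_eq_zero (n : ℤ) {p : SSpace}
    (hp : p ∈ supported ℂ (Set.range Sum.inr)) :
    ∑ᶠ m : ℤ, X (Sum.inl (m + n)) * pderiv (Sum.inl m) p = 0 :=
  finsum_eq_zero_of_forall_eq_zero fun m => by
    rw [pderiv_eq_zero_of_mem_supported (by simp) hp, mul_zero]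

theorem hop_natCast_of_mem_supported (K J : ℂ) (k : {k : ℕ // 1 ≤ k}) {p : SSpace}
    (hp : p ∈ supported ℂ (Set.range Sum.inr)) :
    hop K J (k : ℕ) p = (2 * ((k : ℕ) : ℂ) * K) • pderiv (Sum.inr k) p := by
  have hk := k.2
  rw [hop, dif_neg (by omega), dif_pos (by omega), if_neg (by omega),
    finsum_X_inl_mul_pderiv_inl_eq_zero _ hp]
  simp

theorem hop_neg_natCast_of_mem_supported (K J : ℂ) (k : {k : ℕ // 1 ≤ k}) {p : SSpace}
    (hp : p ∈ supported ℂ (Set.range Sum.inr)) :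
    hop K J (-(k : ℕ)) p = X (Sum.inr k) * p := by
  have hk := k.2
  rw [hop, dif_pos (by omega), dif_neg (by omega), if_neg (by omega),
    finsum_X_inl_mul_pderiv_inl_eq_zero _ hp]
  simp

theorem one_mem_of_hop_mem {K J : ℂ} (hK : K ≠ 0) {N : Submodule ℂ SSpace}
    (hh : ∀ n : ℤ, ∀ q ∈ N, hop K J n q ∈ N) {p : SSpace} (hpN : p ∈ N) (hp0 : p ≠ 0)
    (hpy : p ∈ supported ℂ (Set.range Sum.inr)) : 1 ∈ N := by
  suffices (1 : SSpace) ∈ N ⊓ Subalgebra.toSubmodule (supported ℂ (Set.range Sum.inr)) from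
    (Submodule.mem_inf.1 this).1
  refine one_mem_of_forall_pderiv_mem (fun i q hq => ?_) (Submodule.mem_inf.2 ⟨hpN, hpy⟩) hp0
  obtain ⟨hqN, hqy⟩ := Submodule.mem_inf.1 hq
  refine Submodule.mem_inf.2 ⟨?_, pderiv_mem_supported i hqy⟩
  rcases i with m | k
  · rw [pderiv_eq_zero_of_mem_supported (by simp) hqy]
    exact N.zero_mem
  · have hc : 2 * ((k : ℕ) : ℂ) * K ≠ 0 :=
      mul_ne_zero (mul_ne_zero two_ne_zero (Nat.cast_ne_zero.2 (by have := k.2; omega))) hK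
    have := N.smul_mem (2 * ((k : ℕ) : ℂ) * K)⁻¹ (hh (k : ℕ) q hqN)
    rwa [hop_natCast_of_mem_supported K J k hqy, smul_smul, inv_mul_cancel₀ hc, one_smul] at this

theorem eq_top_of_one_mem {K J : ℂ} {N : Submodule ℂ SSpace}
    (hh : ∀ n : ℤ, ∀ q ∈ N, hop K J n q ∈ N) (hf : ∀ n : ℤ, ∀ q ∈ N, fop n q ∈ N)
    (h1 : 1 ∈ N) : N = ⊤ := by
  refine eq_top_of_one_mem_of_X_mul_mem (s := Set.range Sum.inr) h1 ?_ fun i hi p hpN => ?_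
  · rintro _ ⟨k, rfl⟩ p hpN hpy
    exact hop_neg_natCast_of_mem_supported K J k hpy ▸ hh _ p hpN
  · rcases i with m | k
    · exact hf m p hpN
    · exact absurd ⟨k, rfl⟩ hi

noncomputable def yIdeal : Ideal SSpace := Ideal.span (X '' Set.range Sum.inr)

theorem pderiv_inl_mem_yIdeal (m : ℤ) {p : SSpace} (hp : p ∈ yIdeal) :
    pderiv (Sum.inl m) p ∈ yIdeal :=
  pderiv_mem_span_X_image (by simp) hp

theorem eop_zero_mem_yIdeal (J : ℂ) (n : ℤ) {q : SSpace} (hq : q ∈ yIdeal) :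
    eop 0 J n q ∈ yIdeal := by
  rw [eop, mul_zero, zero_smul, add_zero]
  refine add_mem (add_mem (neg_mem (AddSubmonoidClass.finsum_mem _ fun mk => ?_))
    (AddSubmonoidClass.finsum_mem _ fun k => ?_)) (Submodule.smul_of_tower_mem _ _ ?_)
  · exact Ideal.mul_mem_left _ _ (pderiv_inl_mem_yIdeal _ (pderiv_inl_mem_yIdeal _ hq))
  · exact Ideal.mul_mem_left _ _ (pderiv_inl_mem_yIdeal _ hq)
  · exact pderiv_inl_mem_yIdeal _ hq

theorem hop_zero_mem_yIdeal (J : ℂ) (n : ℤ) {q : SSpace} (hq : q ∈ yIdeal) :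
    hop 0 J n q ∈ yIdeal := by
  simp only [hop, mul_zero, zero_smul, dite_eq_ite, ite_self, add_zero]
  refine add_mem (add_mem (neg_mem (Submodule.smul_of_tower_mem _ _
    (AddSubmonoidClass.finsum_mem _ fun m => ?_))) ?_) (Submodule.smul_of_tower_mem _ _ hq)
  · exact Ideal.mul_mem_left _ _ (pderiv_inl_mem_yIdeal _ hq)
  · split_ifs
    · exact Ideal.mul_mem_left _ _ hq
    · exact zero_mem _

theorem yIdeal_ne_bot : yIdeal ≠ ⊥ := by
  refine (Submodule.ne_bot_iff _).2 ⟨X (Sum.inr ⟨1, le_rfl⟩), ?_, X_ne_zero _⟩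
  exact Ideal.subset_span ⟨_, ⟨_, rfl⟩, rfl⟩

theorem yIdeal_ne_top : yIdeal ≠ ⊤ := by
  rw [Ideal.ne_top_iff_one, yIdeal, mem_ideal_span_X_image]
  intro h
  obtain ⟨i, -, hi⟩ := h 0 (by simp)
  exact hi rfl

theorem yIdeal_invariant (J : ℂ) :
    (∀ n : ℤ, ∀ q ∈ yIdeal.restrictScalars ℂ, eop 0 J n q ∈ yIdeal.restrictScalars ℂ) ∧
    (∀ n : ℤ, ∀ q ∈ yIdeal.restrictScalars ℂ, hop 0 J n q ∈ yIdeal.restrictScalars ℂ) ∧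
    (∀ n : ℤ, ∀ q ∈ yIdeal.restrictScalars ℂ, fop n q ∈ yIdeal.restrictScalars ℂ) :=
  ⟨fun n _ => eop_zero_mem_yIdeal J n, fun n _ => hop_zero_mem_yIdeal J n,
    fun _ _ hq => yIdeal.mul_mem_left _ hq⟩

theorem eq_bot_or_eq_top {K J : ℂ} (hK : K ≠ 0) {N : Submodule ℂ SSpace}
    (he : ∀ n : ℤ, ∀ q ∈ N, eop K J n q ∈ N) (hh : ∀ n : ℤ, ∀ q ∈ N, hop K J n q ∈ N)
    (hf : ∀ n : ℤ, ∀ q ∈ N, fop n q ∈ N) : N = ⊥ ∨ N = ⊤ := by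
  refine or_iff_not_imp_left.2 fun hN => ?_
  obtain ⟨q, hqN, hq0⟩ := Submodule.exists_mem_ne_zero_of_ne_bot hN
  obtain ⟨p, hpN, hp0, hpy⟩ := exists_ne_zero_mem_supported_inr he hqN hq0
  exact eq_top_of_one_mem hh hf (one_mem_of_hop_mem hK hh hpN hp0 hpy)

end BernardFelder

/-- the only subspaces of `S` invariant under all of the Bernard–Felder
operators `e_n, h_n, f_n` (`n ∈ ℤ`) are `{0}` and `S` if and only if `K ≠ 0`;
i.e. the Bernard–Felder module is irreducible if and only if `K ≠ 0`. -/
theorem bernard_felder_irreducible_iff (K J : ℂ) :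
    (∀ N : Submodule ℂ SSpace,
      (∀ n : ℤ, ∀ q ∈ N, eop K J n q ∈ N) →
      (∀ n : ℤ, ∀ q ∈ N, hop K J n q ∈ N) →
      (∀ n : ℤ, ∀ q ∈ N, fop n q ∈ N) →
      N = ⊥ ∨ N = ⊤) ↔ K ≠ 0 := by
  refine ⟨fun h hK => ?_, fun hK _ => BernardFelder.eq_bot_or_eq_top hK⟩
  subst hK
  obtain ⟨he, hh, hf⟩ := BernardFelder.yIdeal_invariant J
  rcases h _ he hh hf with h | h
  · exact BernardFelder.yIdeal_ne_bot ((Submodule.restrictScalars_eq_bot_iff ℂ _ _).1 h)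
  · exact BernardFelder.yIdeal_ne_top ((Submodule.restrictScalars_eq_top_iff ℂ _ _).1 h)
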